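/- arXiv:1902.00372 — 4 statements merged into one kernel-verified Lean document; each statement's English description precedes it below -/
import Mathlib

section
/- Let k be a field of characteristic zero, m ≥ 1, and A_m = k[x,y,u,v]/(x^m v − y u − 1). The derivation ∂_m = y ∂/∂x + m x^{m-1} v ∂/∂u of A_m is locally nilpotent. -/
open MvPolynomial

set_option synthInstance.maxHeartbeats 1000000
set_option maxHeartbeats 1000000

section Aux

variable {k A : Type*} [CommRing k] [CommRing A] [Algebra k A] (D : Derivation k A A)

lemma iter_add (n : ℕ) (a b : A) : (⇑D)^[n] (a + b) = (⇑D)^[n] a + (⇑D)^[n] b := by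
  induction n with
  | zero => rfl
  | succ n ih => simp [Function.iterate_succ_apply', ih]

lemma iter_stable {a : A} {N : ℕ} (h : (⇑D)^[N] a = 0) {n : ℕ} (hn : N ≤ n) :
    (⇑D)^[n] a = 0 := by
  obtain ⟨d, rfl⟩ := Nat.exists_eq_add_of_le hn
  rw [Nat.add_comm, Function.iterate_add_apply, h]
  simp [Function.iterate_fixed]

lemma nilp_mul : ∀ F N M a b, N + M ≤ F → (⇑D)^[N] a = 0 → (⇑D)^[M] b = 0 →
    ∃ K, (⇑D)^[K] (a * b) = 0 := by
  intro F
  induction F with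
  | zero =>
    intro N M a b hF ha hb
    obtain rfl : N = 0 := by omega
    exact ⟨0, by rw [show a = 0 from ha, zero_mul]; rfl⟩
  | succ F ih =>
    intro N M a b hF ha hb
    match N, M with
    | 0, M => exact ⟨0, by rw [show a = 0 from ha, zero_mul]; rfl⟩
    | N, 0 => exact ⟨0, by rw [show b = 0 from hb, mul_zero]; rfl⟩
    | N+1, M+1 =>
      have ha' : (⇑D)^[N] (D a) = 0 := by
        rw [← Function.iterate_succ_apply]; exact ha
      have hb' : (⇑D)^[M] (D b) = 0 := by
        rw [← Function.iterate_succ_apply]; exact hb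
      obtain ⟨K1, hK1⟩ := ih N (M+1) (D a) b (by omega) ha' hb
      obtain ⟨K2, hK2⟩ := ih (N+1) M a (D b) (by omega) ha hb'
      refine ⟨max K1 K2 + 1, ?_⟩
      rw [Function.iterate_add_apply, Function.iterate_one, D.leibniz, smul_eq_mul,
        smul_eq_mul, iter_add, mul_comm b (D a),
        iter_stable D hK1 (le_max_left K1 K2), iter_stable D hK2 (le_max_right K1 K2),
        add_zero]

lemma nilp_mul' {a b : A} {N M : ℕ} (ha : (⇑D)^[N] a = 0) (hb : (⇑D)^[M] b = 0) :
    ∃ K, (⇑D)^[K] (a * b) = 0 :=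
  nilp_mul D (N + M) N M a b le_rfl ha hb

noncomputable def qD (I : Ideal A) (h : ∀ a ∈ I, D a ∈ I) :
    Derivation k (A ⧸ I) (A ⧸ I) where
  toFun x := Quotient.liftOn' x (fun p => Ideal.Quotient.mk I (D p)) (by
    intro p q hpq
    have hpq' : p - q ∈ I := by
      rwa [Submodule.quotientRel_def] at hpq
    exact Ideal.Quotient.eq.mpr (by simpa using h _ hpq'))
  map_add' x y := by
    obtain ⟨p, rfl⟩ := Ideal.Quotient.mk_surjective x
    obtain ⟨q, rfl⟩ := Ideal.Quotient.mk_surjective y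
    show Ideal.Quotient.mk I (D (p + q)) = Ideal.Quotient.mk I (D p) + Ideal.Quotient.mk I (D q)
    rw [map_add, map_add]
  map_smul' c x := by
    obtain ⟨p, rfl⟩ := Ideal.Quotient.mk_surjective x
    show Ideal.Quotient.mk I (D (c • p)) = c • Ideal.Quotient.mk I (D p)
    rw [D.map_smul, ← Ideal.Quotient.mkₐ_eq_mk k I]
    exact map_smul (Ideal.Quotient.mkₐ k I).toLinearMap c (D p)
  map_one_eq_zero' := by
    show Ideal.Quotient.mk I (D 1) = 0
    rw [Derivation.map_one_eq_zero, map_zero]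
  leibniz' x y := by
    obtain ⟨p, rfl⟩ := Ideal.Quotient.mk_surjective x
    obtain ⟨q, rfl⟩ := Ideal.Quotient.mk_surjective y
    show Ideal.Quotient.mk I (D (p * q)) = _
    rw [D.leibniz]
    show _ = Ideal.Quotient.mk I p • Ideal.Quotient.mk I (D q)
        + Ideal.Quotient.mk I q • Ideal.Quotient.mk I (D p)
    rw [map_add, smul_eq_mul, smul_eq_mul, map_mul, map_mul]
    rfl

lemma qD_mk (I : Ideal A) (h : ∀ a ∈ I, D a ∈ I) (p : A) :
    qD D I h (Ideal.Quotient.mk I p) = Ideal.Quotient.mk I (D p) := rfl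

end Aux

/-- The derivation `∂_m = y ∂/∂x + m x^{m-1} v ∂/∂u` descends to a derivation of
`A_m = k[x,y,u,v]/(x^m v − y u − 1)` which is locally nilpotent.
Variables: `X 0 = x`, `X 1 = y`, `X 2 = u`, `X 3 = v`. -/
theorem stmt4 (k : Type) [Field k] [CharZero k] (m : ℕ) (hm : 1 ≤ m) :
    ∃ D' : Derivation k
        (MvPolynomial (Fin 4) k ⧸
          Ideal.span {(X 0 ^ m * X 3 - X 1 * X 2 - 1 : MvPolynomial (Fin 4) k)})
        (MvPolynomial (Fin 4) k ⧸
          Ideal.span {(X 0 ^ m * X 3 - X 1 * X 2 - 1 : MvPolynomial (Fin 4) k)}),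
      (∀ p : MvPolynomial (Fin 4) k,
        D' (Ideal.Quotient.mk _ p) =
          Ideal.Quotient.mk _
            ((mkDerivation k
              (![X 1, 0, (m : MvPolynomial (Fin 4) k) * X 0 ^ (m - 1) * X 3, 0] :
                Fin 4 → MvPolynomial (Fin 4) k)) p)) ∧
      (∀ a, ∃ N : ℕ, (⇑D')^[N] a = 0) := by
  set A := MvPolynomial (Fin 4) k
  set D : Derivation k A A := mkDerivation k
    (![X 1, 0, (m : A) * X 0 ^ (m - 1) * X 3, 0] : Fin 4 → A) with hD
  have hDX0 : D (X 0) = X 1 := by rw [hD, mkDerivation_X]; rfl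
  have hDX1 : D (X 1) = 0 := by rw [hD, mkDerivation_X]; rfl
  have hDX2 : D (X 2) = (m : A) * X 0 ^ (m - 1) * X 3 := by rw [hD, mkDerivation_X]; rfl
  have hDX3 : D (X 3) = 0 := by rw [hD, mkDerivation_X]; rfl
  set f : A := X 0 ^ m * X 3 - X 1 * X 2 - 1 with hf
  set I : Ideal A := Ideal.span {f} with hI
  -- D kills f
  have hDf : D f = 0 := by
    rw [hf, map_sub, map_sub, Derivation.map_one_eq_zero, D.leibniz, D.leibniz,
      D.leibniz_pow, hDX0, hDX1, hDX2, hDX3]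
    simp only [smul_eq_mul, nsmul_eq_mul]
    ring
  -- D preserves I
  have hstab : ∀ a ∈ I, D a ∈ I := by
    intro a ha
    rw [hI, Ideal.mem_span_singleton'] at ha
    obtain ⟨p, rfl⟩ := ha
    rw [D.leibniz, hDf, smul_zero, zero_add, smul_eq_mul]
    exact Ideal.mul_mem_right _ _ (Ideal.mem_span_singleton_self f)
  -- local nilpotence on the polynomial ring
  have hXnil : ∀ i : Fin 4, ∃ N, (⇑D)^[N] (X i : A) = 0 := by
    have h1 : ∃ N, (⇑D)^[N] (X 1 : A) = 0 := ⟨1, by simpa using hDX1⟩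
    have h3 : ∃ N, (⇑D)^[N] (X 3 : A) = 0 := ⟨1, by simpa using hDX3⟩
    have h0 : ∃ N, (⇑D)^[N] (X 0 : A) = 0 :=
      ⟨2, by rw [show (2:ℕ) = 1 + 1 from rfl, Function.iterate_add_apply,
        Function.iterate_one, hDX0, hDX1]⟩
    have hpow : ∀ j : ℕ, ∃ N, (⇑D)^[N] ((X 0 : A) ^ j) = 0 := by
      intro j
      induction j with
      | zero => exact ⟨1, by simpa using D.map_one_eq_zero⟩
      | succ j ih =>
        obtain ⟨N1, hN1⟩ := ih
        obtain ⟨N0, hN0⟩ := h0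
        rw [pow_succ]
        exact nilp_mul' D hN1 hN0
    intro i
    fin_cases i
    · exact h0
    · exact h1
    · -- X 2
      obtain ⟨N1, hN1⟩ := hpow (m - 1)
      obtain ⟨N3, hN3⟩ := h3
      have hc : (⇑D)^[1] ((m : A)) = 0 := by simpa using D.map_natCast m
      obtain ⟨K1, hK1⟩ := nilp_mul' D hc hN1
      obtain ⟨K2, hK2⟩ := nilp_mul' D hK1 hN3
      refine ⟨K2 + 1, ?_⟩
      rw [Function.iterate_add_apply, Function.iterate_one]
      show (⇑D)^[K2] (D (X 2)) = 0
      rw [hDX2]; exact hK2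
    · exact h3
  have key : ∀ p : A, ∃ N, (⇑D)^[N] p = 0 := by
    intro p
    induction p using MvPolynomial.induction_on with
    | C a =>
      exact ⟨1, by rw [Function.iterate_one, ← MvPolynomial.algebraMap_eq, D.map_algebraMap]⟩
    | add p q hp hq =>
      obtain ⟨N, hN⟩ := hp
      obtain ⟨M, hM⟩ := hq
      exact ⟨max N M, by
        rw [iter_add, iter_stable D hN (le_max_left N M),
          iter_stable D hM (le_max_right N M), add_zero]⟩
    | mul_X p i hp =>
      obtain ⟨N, hN⟩ := hp
      obtain ⟨M, hM⟩ := hXnil i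
      exact nilp_mul' D hN hM
  refine ⟨qD D I hstab, fun p => rfl, ?_⟩
  intro a
  obtain ⟨p, rfl⟩ := Ideal.Quotient.mk_surjective a
  obtain ⟨N, hN⟩ := key p
  refine ⟨N, ?_⟩
  have hiter : ∀ (n : ℕ) (q : A),
      (⇑(qD D I hstab))^[n] (Ideal.Quotient.mk I q) = Ideal.Quotient.mk I ((⇑D)^[n] q) := by
    intro n
    induction n with
    | zero => intro q; rfl
    | succ n ih =>
      intro q
      rw [Function.iterate_succ_apply, Function.iterate_succ_apply, qD_mk, ih]
  rw [hiter, hN, map_zero]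
end

section
/- Let k be a field of characteristic zero, m ≥ 1, and A_m = k[x,y,u,v]/(x^m v − y u − 1). The kernel of the locally nilpotent derivation ∂_m = y ∂/∂x + m x^{m-1} v ∂/∂u on A_m is exactly the subalgebra k[y,v] ⊆ A_m. -/
/-!
In `A_m` the relation reads `y u = x^m v - 1`, so multiplying by a power of `y` moves any
element into the image of `k[x,y,v]`. There `∂_m` acts as `y ∂/∂x`; since the relation has
degree one in `u`, no nonzero element of `k[x,y,v]` is a multiple of it, so a constant
`P ∈ k[x,y,v]` has `∂P/∂x = 0` and lies in `k[y,v]` (characteristic zero).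

The power of `y` is removed one factor at a time. If `y p = G + q F` with `G ∈ k[y,v]` and `F`
the relation, setting `y = 0` gives `0 = G(0,v) + q(x,0,u,v) (x^m v - 1)`; comparing degrees
in `x` shows that both terms vanish, so `y` divides `q` and `G`, and cancelling `y` gives
`p ≡ G / y`.
-/

open MvPolynomial

namespace MvPolynomial

variable {σ R : Type*}

section CommSemiring

variable [CommSemiring R]

theorem vars_pderiv_subset (i : σ) (p : MvPolynomial σ R) : (pderiv i p).vars ⊆ p.vars := by
  classical
  intro j hj
  obtain ⟨d, hd, hdj⟩ := (mem_vars_iff_mem_support j).1 hj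
  rw [mem_support_iff, coeff_pderiv] at hd
  refine (mem_vars_iff_mem_support j).2
    ⟨d + Finsupp.single i 1, mem_support_iff.2 (left_ne_zero_of_mul hd), ?_⟩
  rw [Finsupp.mem_support_iff] at hdj ⊢
  simp only [Finsupp.add_apply]
  omega

theorem notMem_vars_of_pderiv_eq_zero [NoZeroDivisors R] [CharZero R] {i : σ}
    {p : MvPolynomial σ R} (h : pderiv i p = 0) : i ∉ p.vars := by
  classical
  intro hi
  obtain ⟨d, hd, hdi⟩ := (mem_vars_iff_mem_support i).1 hi
  have hle : Finsupp.single i 1 ≤ d :=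
    Finsupp.single_le_iff.2 (Nat.one_le_iff_ne_zero.2 (Finsupp.mem_support_iff.1 hdi))
  have hcoeff := coeff_pderiv (i := i) p (d - Finsupp.single i 1)
  rw [h, coeff_zero, tsub_add_cancel_of_le hle] at hcoeff
  exact mul_ne_zero (mem_support_iff.1 hd) (Nat.cast_add_one_ne_zero _) hcoeff.symm

theorem X_mem_supported_of_mem {s : Set σ} {i : σ} (h : i ∈ s) :
    (X i : MvPolynomial σ R) ∈ supported R s :=
  Algebra.subset_adjoin (Set.mem_image_of_mem X h)

variable [DecidableEq σ] [NoZeroDivisors R]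

theorem vars_mul_of_ne_zero {p q : MvPolynomial σ R} (hp : p ≠ 0) (hq : q ≠ 0) :
    (p * q).vars = p.vars ∪ q.vars := by
  simp only [vars_def, degrees_mul_eq hp hq, Multiset.toFinset_add]

theorem eq_zero_of_notMem_vars_mul {i : σ} {p q : MvPolynomial σ R} (hp : i ∈ p.vars)
    (hpq : i ∉ (p * q).vars) : q = 0 := by
  by_contra hq
  have hp0 : p ≠ 0 := by rintro rfl; simp at hp
  exact hpq (vars_mul_of_ne_zero hp0 hq ▸ Finset.mem_union_left _ hp)

theorem mem_supported_of_mul_mem_supported {s : Set σ} {p q : MvPolynomial σ R} (hp : p ≠ 0)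
    (h : p * q ∈ supported R s) : q ∈ supported R s := by
  obtain rfl | hq := eq_or_ne q 0
  · exact zero_mem _
  rw [mem_supported, vars_mul_of_ne_zero hp hq, Finset.coe_union] at h
  exact mem_supported.2 (Set.union_subset_iff.1 h).2

end CommSemiring

section CommRing

variable [CommRing R] [DecidableEq σ]

theorem X_dvd_sub_aeval_update_zero (i : σ) (p : MvPolynomial σ R) :
    X i ∣ p - aeval (Function.update X i 0 : σ → MvPolynomial σ R) p := by
  induction p using MvPolynomial.induction_on with
  | C a => simp
  | add p q hp hq => simpa [add_sub_add_comm] using dvd_add hp hq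
  | mul_X p j hp =>
    obtain rfl | hj := eq_or_ne j i
    · simp
    · simpa [Function.update_of_ne hj, ← sub_mul] using hp.mul_right (X j)

theorem vars_aeval_update_zero_subset (i : σ) (p : MvPolynomial σ R) :
    (aeval (Function.update X i 0 : σ → MvPolynomial σ R) p).vars ⊆ p.vars := by
  rw [aeval_eq_bind₁]
  refine (vars_bind₁ _ p).trans (Finset.biUnion_subset.2 fun j hj => ?_)
  obtain rfl | hji := eq_or_ne j i
  · simp
  · rw [Function.update_of_ne hji]
    intro l hl
    rw [vars_def, Multiset.mem_toFinset] at hl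
    rwa [Multiset.mem_singleton.1 (Multiset.subset_of_le (degrees_X' j) hl)]

end CommRing

end MvPolynomial

namespace Am

/-! `X 0, X 1, X 2, X 3` stand for `x, y, u, v`; `supported k {1, 3}` is `k[y,v]` and
`supported k {0, 1, 3}` is `k[x,y,v]`. -/

variable {k : Type*} [CommRing k] (m : ℕ)

noncomputable def rel : MvPolynomial (Fin 4) k := X 0 ^ m * X 3 - X 1 * X 2 - 1

noncomputable def der : Derivation k (MvPolynomial (Fin 4) k) (MvPolynomial (Fin 4) k) :=
  mkDerivation k ![X 1, 0, (m : MvPolynomial (Fin 4) k) * X 0 ^ (m - 1) * X 3, 0]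

@[simp] theorem der_X0 : der m (X 0 : MvPolynomial (Fin 4) k) = X 1 := mkDerivation_X _ _ _
@[simp] theorem der_X1 : der m (X 1 : MvPolynomial (Fin 4) k) = 0 := mkDerivation_X _ _ _
@[simp] theorem der_X2 :
    der m (X 2 : MvPolynomial (Fin 4) k) = (m : MvPolynomial (Fin 4) k) * X 0 ^ (m - 1) * X 3 :=
  mkDerivation_X _ _ _
@[simp] theorem der_X3 : der m (X 3 : MvPolynomial (Fin 4) k) = 0 := mkDerivation_X _ _ _

theorem der_rel : der m (rel m : MvPolynomial (Fin 4) k) = 0 := by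
  simp only [rel, map_sub, Derivation.leibniz, Derivation.leibniz_pow, Derivation.map_one_eq_zero,
    der_X0, der_X1, der_X2, der_X3, smul_eq_mul, nsmul_eq_mul]
  ring

theorem rel_dvd_der {a : MvPolynomial (Fin 4) k} (h : rel m ∣ a) : rel m ∣ der m a := by
  obtain ⟨c, rfl⟩ := h
  simp [Derivation.leibniz, der_rel]

theorem der_X1_pow_mul (n : ℕ) (p : MvPolynomial (Fin 4) k) :
    der m (X 1 ^ n * p) = X 1 ^ n * der m p := by
  simp [Derivation.leibniz, Derivation.leibniz_pow]

theorem der_eq_X1_mul_pderiv {P : MvPolynomial (Fin 4) k} (hP : P ∈ supported k {0, 1, 3}) :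
    der m P = X 1 * pderiv 0 P :=
  derivation_eqOn_supported (D₂ := (X 1 : MvPolynomial (Fin 4) k) • pderiv 0)
    (by rintro i (rfl | rfl | rfl) <;> simp [pderiv_X]) hP

theorem der_eq_zero_of_mem_supported {G : MvPolynomial (Fin 4) k}
    (hG : G ∈ supported k {1, 3}) : der m G = 0 :=
  derivation_eqOn_supported (D₂ := 0) (by rintro i (rfl | rfl) <;> simp) hG

theorem two_mem_vars_rel [Nontrivial k] :
    (2 : Fin 4) ∈ (rel m : MvPolynomial (Fin 4) k).vars := by
  refine not_imp_comm.1 pderiv_eq_zero_of_notMem_vars ?_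
  simp [rel, pderiv_X]

theorem zero_mem_vars_X0_pow_mul_X3_sub_one [Nontrivial k] (hm : 1 ≤ m) :
    (0 : Fin 4) ∈ (X 0 ^ m * X 3 - 1 : MvPolynomial (Fin 4) k).vars := by
  rw [mem_vars_iff_degreeOf_ne_zero, sub_eq_add_neg, degreeOf_add_eq_of_degreeOf_lt] <;>
    simp [degreeOf_mul_X_of_ne, degreeOf_neg, degreeOf_one] <;> omega

theorem exists_X1_pow_mul_sub_mem_supported (p : MvPolynomial (Fin 4) k) :
    ∃ n : ℕ, ∃ P ∈ supported k {0, 1, 3}, rel m ∣ X 1 ^ n * p - P := by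
  induction p using MvPolynomial.induction_on with
  | C a => exact ⟨0, C a, Subalgebra.algebraMap_mem _ a, by simp⟩
  | add p q hp hq =>
    obtain ⟨n, P, hP, hpP⟩ := hp
    obtain ⟨n', Q, hQ, hqQ⟩ := hq
    have hy : ∀ l : ℕ, (X 1 ^ l : MvPolynomial (Fin 4) k) ∈ supported k {0, 1, 3} :=
      fun l => pow_mem (X_mem_supported_of_mem (by simp)) l
    refine ⟨n + n', X 1 ^ n' * P + X 1 ^ n * Q,
      add_mem (mul_mem (hy _) hP) (mul_mem (hy _) hQ), ?_⟩
    convert dvd_add (hpP.mul_left (X 1 ^ n')) (hqQ.mul_left (X 1 ^ n)) using 1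
    ring
  | mul_X p j hp =>
    obtain ⟨n, P, hP, hpP⟩ := hp
    by_cases hj : j = 2
    · subst hj
      -- `y u ≡ x ^ m v - 1` trades the factor `u` for one more power of `y`.
      refine ⟨n + 1, P * (X 0 ^ m * X 3 - 1), mul_mem hP ?_, ?_⟩
      · exact sub_mem (mul_mem (pow_mem (X_mem_supported_of_mem (by simp)) m)
          (X_mem_supported_of_mem (by simp))) (one_mem _)
      · convert dvd_sub (hpP.mul_left (X 1 * X 2)) (dvd_mul_right (rel m) P) using 1
        simp only [rel]
        ring
    · refine ⟨n, P * X j, mul_mem hP (X_mem_supported_of_mem ?_), ?_⟩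
      · fin_cases j <;> simp_all
      · rw [← mul_assoc, ← sub_mul]
        exact hpP.mul_right (X j)

theorem mem_supported_of_rel_dvd_der [IsDomain k] [CharZero k] {P : MvPolynomial (Fin 4) k}
    (hP : P ∈ supported k {0, 1, 3}) (h : rel m ∣ der m P) : P ∈ supported k {1, 3} := by
  obtain ⟨c, hc⟩ := h
  rw [der_eq_X1_mul_pderiv m hP] at hc
  have hc0 : c = 0 := by
    refine eq_zero_of_notMem_vars_mul (two_mem_vars_rel m) fun h2 => ?_
    have hP' : pderiv 0 P ∈ supported k {0, 1, 3} :=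
      mem_supported.2 ((Finset.coe_subset.2 (vars_pderiv_subset 0 P)).trans (mem_supported.1 hP))
    have := mem_supported.1 (mul_mem (X_mem_supported_of_mem (by simp)) hP') (hc ▸ h2)
    simp at this
  rw [hc0, mul_zero, mul_eq_zero] at hc
  have h0 := notMem_vars_of_pderiv_eq_zero (hc.resolve_left (X_ne_zero 1))
  rw [mem_supported] at hP ⊢
  intro i hi
  have := hP hi
  fin_cases i <;> simp_all

theorem exists_rel_dvd_sub_of_rel_dvd_X1_mul_sub [IsDomain k] (hm : 1 ≤ m)
    {p G : MvPolynomial (Fin 4) k} (hG : G ∈ supported k {1, 3}) (h : rel m ∣ X 1 * p - G) :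
    ∃ G' ∈ supported k {1, 3}, rel m ∣ p - G' := by
  obtain ⟨q, hq⟩ := h
  set ε : MvPolynomial (Fin 4) k →ₐ[k] MvPolynomial (Fin 4) k :=
    aeval (Function.update X 1 0) with hε
  have hεq : (X 0 ^ m * X 3 - 1) * ε q = -ε G := by
    have := congrArg ε hq
    simp [hε, rel, Function.update_of_ne, -aeval_eq_bind₁] at this
    linear_combination -this
  have hq0 : ε q = 0 := by
    refine eq_zero_of_notMem_vars_mul (zero_mem_vars_X0_pow_mul_X3_sub_one m hm) fun h0 => ?_
    rw [hεq, vars_neg] at h0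
    simpa using mem_supported.1 hG (vars_aeval_update_zero_subset 1 G h0)
  rw [hq0, mul_zero, zero_eq_neg] at hεq
  obtain ⟨q₁, rfl⟩ : X 1 ∣ q := by
    simpa [← hε, hq0] using X_dvd_sub_aeval_update_zero 1 q
  obtain ⟨G₁, rfl⟩ : X 1 ∣ G := by
    simpa [← hε, hεq] using X_dvd_sub_aeval_update_zero 1 G
  refine ⟨G₁, mem_supported_of_mul_mem_supported (X_ne_zero 1) hG, q₁, ?_⟩
  exact mul_left_cancel₀ (X_ne_zero (1 : Fin 4)) (by linear_combination hq)

theorem exists_rel_dvd_sub_of_rel_dvd_X1_pow_mul_sub [IsDomain k] (hm : 1 ≤ m) (n : ℕ)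
    {p G : MvPolynomial (Fin 4) k} (hG : G ∈ supported k {1, 3}) (h : rel m ∣ X 1 ^ n * p - G) :
    ∃ H ∈ supported k {1, 3}, rel m ∣ p - H := by
  induction n generalizing G with
  | zero => exact ⟨G, hG, by simpa using h⟩
  | succ n ih =>
    rw [pow_succ', mul_assoc] at h
    obtain ⟨G', hG', h'⟩ := exists_rel_dvd_sub_of_rel_dvd_X1_mul_sub m hm hG h
    exact ih hG' h'

theorem rel_dvd_der_iff [IsDomain k] [CharZero k] (hm : 1 ≤ m) (p : MvPolynomial (Fin 4) k) :
    rel m ∣ der m p ↔ ∃ H ∈ supported k {1, 3}, rel m ∣ p - H := by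
  constructor
  · intro h
    obtain ⟨n, P, hP, hpP⟩ := exists_X1_pow_mul_sub_mem_supported m p
    have hP' : rel m ∣ der m P := by
      have := rel_dvd_der m hpP
      rw [map_sub, der_X1_pow_mul] at this
      simpa using dvd_sub (h.mul_left (X 1 ^ n)) this
    exact exists_rel_dvd_sub_of_rel_dvd_X1_pow_mul_sub m hm n
      (mem_supported_of_rel_dvd_der m hP hP') hpP
  · rintro ⟨H, hH, hpH⟩
    simpa [der_eq_zero_of_mem_supported m hH] using rel_dvd_der m hpH

end Am

/-- The kernel of the locally nilpotent derivation `∂_m = y ∂/∂x + m x^{m-1} v ∂/∂u` on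
`A_m = k[x,y,u,v]/(x^m v − y u − 1)` is exactly the subalgebra `k[y,v]`.
Variables: `X 0 = x`, `X 1 = y`, `X 2 = u`, `X 3 = v`. -/
theorem stmt5 (k : Type) [Field k] [CharZero k] (m : ℕ) (hm : 1 ≤ m)
    (I : Ideal (MvPolynomial (Fin 4) k))
    (hI : I = Ideal.span {(X 0 ^ m * X 3 - X 1 * X 2 - 1 : MvPolynomial (Fin 4) k)})
    (D' : Derivation k (MvPolynomial (Fin 4) k ⧸ I) (MvPolynomial (Fin 4) k ⧸ I))
    (hD' : ∀ p : MvPolynomial (Fin 4) k,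
      D' (Ideal.Quotient.mk I p) =
        Ideal.Quotient.mk I
          ((mkDerivation k
            (![X 1, 0, (m : MvPolynomial (Fin 4) k) * X 0 ^ (m - 1) * X 3, 0] :
              Fin 4 → MvPolynomial (Fin 4) k)) p)) :
    ∀ a, D' a = 0 ↔ a ∈ Algebra.adjoin k
      ({Ideal.Quotient.mk I (X 1 : MvPolynomial (Fin 4) k),
        Ideal.Quotient.mk I (X 3 : MvPolynomial (Fin 4) k)} :
        Set (MvPolynomial (Fin 4) k ⧸ I)) := by
  have hadjoin : Algebra.adjoin k {Ideal.Quotient.mk I (X 1), Ideal.Quotient.mk I (X 3)} =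
      (supported k ({1, 3} : Set (Fin 4))).map (Ideal.Quotient.mkₐ k I) := by
    rw [supported_eq_adjoin_X, AlgHom.map_adjoin, ← Set.image_comp, Set.image_pair]
    rfl
  intro a
  obtain ⟨p, rfl⟩ := Ideal.Quotient.mk_surjective a
  rw [hD', hadjoin, Subalgebra.mem_map, Ideal.Quotient.eq_zero_iff_mem, hI,
    Ideal.mem_span_singleton]
  refine (Am.rel_dvd_der_iff m hm p).trans (exists_congr fun H => and_congr_right fun _ => ?_)
  rw [Ideal.Quotient.mkₐ_eq_mk, Ideal.Quotient.eq, Ideal.mem_span_singleton, ← dvd_neg,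
    neg_sub]
  rfl
end

section
/- Let k be a field, m ≥ 1, and consider the ring B = k[x_1^{±1}, x_2^{±1}, y, t_1, t_2]/I where I is generated by x_1^{-m} − x_2^{-m}, x_1 − x_2 + y(t_1 − t_2), and P(x_1,y,t_1) − P(x_2,y,t_2) with P(x,y,t) = Σ_{n=1}^m C(m,n)(x^{-1}t)^n y^{n-1}. Writing x_1^{-m} − x_2^{-m} = (x_1^{-1} − x_2^{-1}) R(x_1^{-1}, x_2^{-1}), the ring B decomposes as a product B ≅ B_0 × B_1, where B_0 is the quotient by (x_1^{-1} − x_2^{-1}, x_1 − x_2 + y(t_1−t_2), P(x_1,y,t_1) − P(x_2,y,t_2)) and B_1 is the quotient by (R(x_1^{-1},x_2^{-1}), x_1 − x_2 + y(t_1−t_2), P(x_1,y,t_1) − P(x_2,y,t_2)). -/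
/-!
With `a = x₁⁻¹`, `b = x₂⁻¹` we have `a^m − b^m = (a − b) R(a, b)`, and modulo `a − b` the sum
`R(a, b)` reduces to `m b^(m-1)`, a unit since `m ≠ 0` in `k` and `b` is invertible. Hence
`a − b` and `R(a, b)` are coprime, so for `J` the ideal of the two remaining relations,
`(a^m − b^m) + J = ((a − b) + J) ∩ (R + J)` with coprime factors, and the Chinese remainder
theorem splits `B`.
-/

open MvPolynomial

set_option synthInstance.maxHeartbeats 1000000
set_option maxHeartbeats 1000000

namespace Stmt7

variable (k : Type) [Field k] [IsAlgClosed k] [CharZero k] (m : ℕ)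

/-- The Laurent ring `k[x₁^{±1}, x₂^{±1}, y, t₁, t₂]`, realized as the localization of
`k[x₁,x₂,y,t₁,t₂]` away from `x₁ x₂`. Variables: `X 0 = x₁`, `X 1 = x₂`, `X 2 = y`,
`X 3 = t₁`, `X 4 = t₂`. -/
abbrev S := Localization.Away ((X 0 * X 1 : MvPolynomial (Fin 5) k))

noncomputable def x₁ : S k := algebraMap (MvPolynomial (Fin 5) k) (S k) (X 0)
noncomputable def x₂ : S k := algebraMap (MvPolynomial (Fin 5) k) (S k) (X 1)
noncomputable def y : S k := algebraMap (MvPolynomial (Fin 5) k) (S k) (X 2)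
noncomputable def t₁ : S k := algebraMap (MvPolynomial (Fin 5) k) (S k) (X 3)
noncomputable def t₂ : S k := algebraMap (MvPolynomial (Fin 5) k) (S k) (X 4)

/-- `P(x,y,t) = Σ_{n=1}^m C(m,n) (x⁻¹ t)^n y^{n-1}`. -/
noncomputable def P (x t : S k) : S k :=
  ∑ n ∈ Finset.Icc 1 m, (m.choose n : S k) * (Ring.inverse x * t) ^ n * y k ^ (n - 1)

/-- `R(a,b) = Σ_{i=0}^{m-1} a^i b^{m-1-i}`, so that `a^m − b^m = (a−b) R(a,b)`;
here evaluated at `a = x₁⁻¹`, `b = x₂⁻¹`. -/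
noncomputable def Rpol : S k :=
  ∑ i ∈ Finset.range m, (Ring.inverse (x₁ k)) ^ i * (Ring.inverse (x₂ k)) ^ (m - 1 - i)

noncomputable def I : Ideal (S k) :=
  Ideal.span {(Ring.inverse (x₁ k)) ^ m - (Ring.inverse (x₂ k)) ^ m,
    x₁ k - x₂ k + y k * (t₁ k - t₂ k),
    P k m (x₁ k) (t₁ k) - P k m (x₂ k) (t₂ k)}

noncomputable def I₀ : Ideal (S k) :=
  Ideal.span {Ring.inverse (x₁ k) - Ring.inverse (x₂ k),
    x₁ k - x₂ k + y k * (t₁ k - t₂ k),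
    P k m (x₁ k) (t₁ k) - P k m (x₂ k) (t₂ k)}

noncomputable def I₁ : Ideal (S k) :=
  Ideal.span {Rpol k m,
    x₁ k - x₂ k + y k * (t₁ k - t₂ k),
    P k m (x₁ k) (t₁ k) - P k m (x₂ k) (t₂ k)}

section CommRing

variable {R : Type*} [CommRing R]

theorem sub_dvd_geom_sum₂_sub (a b : R) (n : ℕ) :
    a - b ∣ (∑ i ∈ Finset.range n, a ^ i * b ^ (n - 1 - i)) - n * b ^ (n - 1) := by
  rw [← Ideal.mem_span_singleton, ← Ideal.Quotient.eq]
  have hab : Ideal.Quotient.mk (Ideal.span {a - b}) a = Ideal.Quotient.mk _ b :=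
    Ideal.Quotient.eq.2 (Ideal.mem_span_singleton_self _)
  simp only [map_sum, map_mul, map_pow, map_natCast, hab, geom_sum₂_self]

theorem isCoprime_sub_geom_sum₂ {a b : R} {n : ℕ} (hb : IsUnit b) (hn : IsUnit (n : R)) :
    IsCoprime (a - b) (∑ i ∈ Finset.range n, a ^ i * b ^ (n - 1 - i)) := by
  obtain ⟨c, hc⟩ := sub_dvd_geom_sum₂_sub a b n
  have hunit : IsCoprime (a - b) (n * b ^ (n - 1)) :=
    isCoprime_one_right.of_isCoprime_of_dvd_right (hn.mul (hb.pow _)).dvd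
  rw [sub_eq_iff_eq_add.1 hc]
  exact hunit.mul_add_left_right c

theorem isCoprime_span_singleton_sup {f g : R} (h : IsCoprime f g) (J : Ideal R) :
    IsCoprime (Ideal.span {f} ⊔ J) (Ideal.span {g} ⊔ J) :=
  Ideal.isCoprime_iff_sup_eq.2 <| eq_top_mono (sup_le_sup le_sup_left le_sup_left)
    ((Ideal.isCoprime_span_singleton_iff f g).2 h).sup_eq

theorem span_singleton_mul_sup_eq_inf {f g : R} (h : IsCoprime f g) (J : Ideal R) :
    Ideal.span {f * g} ⊔ J = (Ideal.span {f} ⊔ J) ⊓ (Ideal.span {g} ⊔ J) := by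
  refine le_antisymm (sup_le (le_inf ?_ ?_) (le_inf le_sup_right le_sup_right)) ?_
  · exact (Ideal.span_singleton_le_span_singleton.2 (dvd_mul_right f g)).trans le_sup_left
  · exact (Ideal.span_singleton_le_span_singleton.2 (dvd_mul_left g f)).trans le_sup_left
  rw [← Ideal.mul_eq_inf_of_isCoprime (isCoprime_span_singleton_sup h J), Ideal.sup_mul,
    Ideal.mul_sup, Ideal.mul_sup, Ideal.span_singleton_mul_span_singleton]
  exact sup_le (sup_le le_sup_left (le_sup_of_le_right Ideal.mul_le_right))
    (le_sup_of_le_right (sup_le Ideal.mul_le_left Ideal.mul_le_left))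

theorem exists_quotient_ringEquiv_prod_of_eq_inf {I I₀ I₁ : Ideal R} (hcop : IsCoprime I₀ I₁)
    (h : I = I₀ ⊓ I₁) :
    ∃ e : (R ⧸ I) ≃+* (R ⧸ I₀) × (R ⧸ I₁),
      ∀ s : R, e (Ideal.Quotient.mk I s) = (Ideal.Quotient.mk I₀ s, Ideal.Quotient.mk I₁ s) :=
  ⟨(Ideal.quotEquivOfEq h).trans (Ideal.quotientInfEquivQuotientProd _ _ hcop), fun _ => rfl⟩

end CommRing

theorem isUnit_natCast_of_algebra {K A : Type*} [Field K] [CharZero K] [Semiring A] [Algebra K A]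
    {n : ℕ} (hn : n ≠ 0) : IsUnit (n : A) := by
  simpa using (isUnit_iff_ne_zero.2 (Nat.cast_ne_zero.2 hn : (n : K) ≠ 0)).map (algebraMap K A)

theorem isUnit_x₂ {K : Type} [Field K] : IsUnit (x₂ K) := by
  have h := IsLocalization.Away.algebraMap_isUnit (S := S K) (X 0 * X 1 : MvPolynomial (Fin 5) K)
  exact isUnit_of_mul_isUnit_right (by rwa [map_mul] at h)

/-- The ring `B = S/I` decomposes as the product `B₀ × B₁ = S/I₀ × S/I₁`, compatibly with
the quotient maps. -/
theorem stmt7 (hm : 1 ≤ m) :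
    ∃ e : (S k ⧸ I k m) ≃+* (S k ⧸ I₀ k m) × (S k ⧸ I₁ k m),
      ∀ s : S k, e (Ideal.Quotient.mk (I k m) s) =
        (Ideal.Quotient.mk (I₀ k m) s, Ideal.Quotient.mk (I₁ k m) s) := by
  set J := Ideal.span {x₁ k - x₂ k + y k * (t₁ k - t₂ k),
    P k m (x₁ k) (t₁ k) - P k m (x₂ k) (t₂ k)}
  have hcop : IsCoprime (Ring.inverse (x₁ k) - Ring.inverse (x₂ k)) (Rpol k m) :=
    isCoprime_sub_geom_sum₂ isUnit_x₂.ringInverse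
      (isUnit_natCast_of_algebra (K := k) (by omega))
  have hI : I k m = Ideal.span {(Ring.inverse (x₁ k) - Ring.inverse (x₂ k)) * Rpol k m} ⊔ J := by
    rw [mul_comm (_ - _) (Rpol k m), Rpol, geom_sum₂_mul]
    exact Ideal.span_insert _ _
  have hI₀ : I₀ k m = Ideal.span {Ring.inverse (x₁ k) - Ring.inverse (x₂ k)} ⊔ J :=
    Ideal.span_insert _ _
  have hI₁ : I₁ k m = Ideal.span {Rpol k m} ⊔ J := Ideal.span_insert _ _
  apply exists_quotient_ringEquiv_prod_of_eq_inf
  · rw [hI₀, hI₁]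
    exact isCoprime_span_singleton_sup hcop J
  · rw [hI, hI₀, hI₁]
    exact span_singleton_mul_sup_eq_inf hcop J

end Stmt7
end

section
/- Let k be a field of characteristic zero. On X = Spec k[x,t,u,v,ω]/(v^2 t^3 − x^2 u − 1), for every α ∈ k the k[x,t]-derivation δ_α = 2 v t^3 ∂/∂u + x^2 ∂/∂v + (½(1 + α t) x − t^3) ∂/∂ω is a well-defined locally nilpotent derivation of the coordinate ring. -/
/-!
The derivation `δ_α` kills the defining polynomial `v² t³ − x² u − 1`, so it preserves the
ideal that polynomial generates and descends to the quotient. By the Leibniz rule, the elements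
killed by some iterate of a derivation form a subalgebra; since `δ_α³` kills every variable,
`δ_α` is locally nilpotent on `k[x,t,u,v,ω]`, hence also on the quotient.
-/

open MvPolynomial

namespace Derivation

variable {k R : Type*} [CommRing k] [CommRing R] [Algebra k R] (D : Derivation k R R)

@[simp]
theorem map_ofNat (n : ℕ) [n.AtLeastTwo] : D (ofNat(n) : R) = 0 :=
  D.map_natCast n

def IsLocallyNilpotent : Prop :=
  ∀ a, ∃ n, D^[n] a = 0

theorem iterate_eq_zero_of_le {a : R} {m n : ℕ} (hmn : m ≤ n) (ha : D^[m] a = 0) :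
    D^[n] a = 0 := by
  rw [← Nat.sub_add_cancel hmn, Function.iterate_add_apply, ha, iterate_map_zero]

theorem iterate_mul_eq_zero {a b : R} {m n : ℕ} (ha : D^[m] a = 0) (hb : D^[n] b = 0) :
    D^[m + n] (a * b) = 0 := by
  induction m generalizing a n b with
  | zero => simp_all
  | succ m ihm =>
    induction n generalizing b with
    | zero => simp_all
    | succ n ihn =>
      have hab : D^[m + 1 + n] (a * D b) = 0 := ihn (by rwa [← Function.iterate_succ_apply])
      have hba : D^[m + (n + 1)] (D a * b) = 0 := ihm (by rwa [← Function.iterate_succ_apply]) hb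
      rw [← add_assoc, Function.iterate_succ_apply, D.leibniz, smul_eq_mul, smul_eq_mul,
        iterate_map_add, hab, zero_add, mul_comm, Nat.add_right_comm]
      exact hba

theorem exists_iterate_eq_zero_of_mem_adjoin {s : Set R} (hs : ∀ a ∈ s, ∃ n, D^[n] a = 0)
    {a : R} (ha : a ∈ Algebra.adjoin k s) : ∃ n, D^[n] a = 0 := by
  induction ha using Algebra.adjoin_induction with
  | mem a ha => exact hs a ha
  | algebraMap r => exact ⟨1, D.map_algebraMap r⟩
  | add _ _ _ _ ha hb =>
    obtain ⟨m, hm⟩ := ha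
    obtain ⟨n, hn⟩ := hb
    refine ⟨max m n, ?_⟩
    rw [iterate_map_add, D.iterate_eq_zero_of_le (le_max_left m n) hm,
      D.iterate_eq_zero_of_le (le_max_right m n) hn, add_zero]
  | mul _ _ _ _ ha hb =>
    obtain ⟨m, hm⟩ := ha
    obtain ⟨n, hn⟩ := hb
    exact ⟨m + n, D.iterate_mul_eq_zero hm hn⟩

theorem isLocallyNilpotent_of_adjoin_eq_top {s : Set R} (hs : Algebra.adjoin k s = ⊤)
    (hgen : ∀ a ∈ s, ∃ n, D^[n] a = 0) : D.IsLocallyNilpotent :=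
  fun _ ↦ D.exists_iterate_eq_zero_of_mem_adjoin hgen (hs ▸ Algebra.mem_top)

theorem map_mem_span_singleton {f p : R} (hf : D f ∈ Ideal.span {f})
    (hp : p ∈ Ideal.span {f}) : D p ∈ Ideal.span {f} := by
  obtain ⟨g, rfl⟩ := Ideal.mem_span_singleton'.mp hp
  rw [D.leibniz, smul_eq_mul, smul_eq_mul]
  exact Ideal.add_mem _ (Ideal.mul_mem_left _ _ hf)
    (Ideal.mul_mem_right _ _ (Ideal.mem_span_singleton_self f))

section Quotient

variable (I : Ideal R) (hD : ∀ p ∈ I, D p ∈ I)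

def quotientMap : Derivation k (R ⧸ I) (R ⧸ I) where
  toLinearMap := (Submodule.Quotient.restrictScalarsEquiv k I).toLinearMap ∘ₗ
    Submodule.mapQ (I.restrictScalars k) (I.restrictScalars k) D.toLinearMap hD ∘ₗ
      (Submodule.Quotient.restrictScalarsEquiv k I).symm.toLinearMap
  map_one_eq_zero' := by
    change Ideal.Quotient.mk I (D 1) = 0
    rw [D.map_one_eq_zero, map_zero]
  leibniz' a b := by
    obtain ⟨a, rfl⟩ := Ideal.Quotient.mk_surjective a
    obtain ⟨b, rfl⟩ := Ideal.Quotient.mk_surjective b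
    change Ideal.Quotient.mk I (D (a * b)) =
      Ideal.Quotient.mk I a * Ideal.Quotient.mk I (D b) +
        Ideal.Quotient.mk I b * Ideal.Quotient.mk I (D a)
    simp only [D.leibniz, smul_eq_mul, map_add, map_mul]

theorem quotientMap_mk (p : R) :
    D.quotientMap I hD (Ideal.Quotient.mk I p) = Ideal.Quotient.mk I (D p) :=
  rfl

theorem iterate_quotientMap_mk (n : ℕ) (p : R) :
    (D.quotientMap I hD)^[n] (Ideal.Quotient.mk I p) = Ideal.Quotient.mk I (D^[n] p) :=
  (Function.Semiconj.iterate_right (f := Ideal.Quotient.mk I)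
    (fun p ↦ (D.quotientMap_mk I hD p).symm) n p).symm

variable {D} in
theorem IsLocallyNilpotent.quotientMap (hnil : D.IsLocallyNilpotent) :
    (D.quotientMap I hD).IsLocallyNilpotent := by
  intro a
  obtain ⟨p, rfl⟩ := Ideal.Quotient.mk_surjective a
  obtain ⟨n, hn⟩ := hnil p
  exact ⟨n, by rw [iterate_quotientMap_mk, hn, map_zero]⟩

end Quotient

end Derivation

/-- Variables: `X 0 = x`, `X 1 = t`, `X 2 = u`, `X 3 = v`, `X 4 = ω`. -/
theorem stmt17_general (k : Type) [Field k] (α : k)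
    (I : Ideal (MvPolynomial (Fin 5) k))
    (hI : I = Ideal.span {(X 3 ^ 2 * X 1 ^ 3 - X 0 ^ 2 * X 2 - 1 : MvPolynomial (Fin 5) k)}) :
    (mkDerivation k
        (![0, 0, 2 * X 3 * X 1 ^ 3, X 0 ^ 2,
           C ((2 : k)⁻¹) * (1 + C α * X 1) * X 0 - X 1 ^ 3] :
          Fin 5 → MvPolynomial (Fin 5) k))
      (X 3 ^ 2 * X 1 ^ 3 - X 0 ^ 2 * X 2 - 1) = 0 ∧
    ∃ D' : Derivation k (MvPolynomial (Fin 5) k ⧸ I) (MvPolynomial (Fin 5) k ⧸ I),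
      (∀ p : MvPolynomial (Fin 5) k,
        D' (Ideal.Quotient.mk I p) =
          Ideal.Quotient.mk I
            ((mkDerivation k
              (![0, 0, 2 * X 3 * X 1 ^ 3, X 0 ^ 2,
                 C ((2 : k)⁻¹) * (1 + C α * X 1) * X 0 - X 1 ^ 3] :
                Fin 5 → MvPolynomial (Fin 5) k)) p)) ∧
      (∀ a, ∃ N : ℕ, (⇑D')^[N] a = 0) := by
  set D : Derivation k (MvPolynomial (Fin 5) k) (MvPolynomial (Fin 5) k) :=
    mkDerivation k ![0, 0, 2 * X 3 * X 1 ^ 3, X 0 ^ 2,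
      C ((2 : k)⁻¹) * (1 + C α * X 1) * X 0 - X 1 ^ 3] with hD
  have hf : D (X 3 ^ 2 * X 1 ^ 3 - X 0 ^ 2 * X 2 - 1) = 0 := by
    simp only [hD, map_sub, Derivation.leibniz, Derivation.leibniz_pow, Nat.add_one_sub_one,
      mkDerivation_X, Matrix.cons_val_one, Matrix.cons_val_zero, smul_eq_mul, mul_zero,
      pow_one, Matrix.cons_val, nsmul_eq_mul, Nat.cast_ofNat, zero_add, add_zero,
      Derivation.map_one_eq_zero, sub_zero]
    ring
  have hX (i : Fin 5) : D^[3] (X i) = 0 := by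
    fin_cases i <;> simp [hD, Derivation.leibniz, Derivation.leibniz_pow, mkDerivation_X]
  have hDI : ∀ p ∈ I, D p ∈ I := hI ▸ fun _ ↦ D.map_mem_span_singleton (hf ▸ zero_mem _)
  have hnil : D.IsLocallyNilpotent :=
    D.isLocallyNilpotent_of_adjoin_eq_top adjoin_range_X (by rintro _ ⟨i, rfl⟩; exact ⟨3, hX i⟩)
  exact ⟨hf, D.quotientMap I hDI, D.quotientMap_mk I hDI, hnil.quotientMap I hDI⟩

/-- On `X = Spec k[x,t,u,v,ω]/(v² t³ − x² u − 1)`, for every `α ∈ k` the `k[x,t]`-derivation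
`δ_α = 2 v t³ ∂/∂u + x² ∂/∂v + (½(1 + α t) x − t³) ∂/∂ω` is a well-defined locally
nilpotent derivation of the coordinate ring.
Variables: `X 0 = x`, `X 1 = t`, `X 2 = u`, `X 3 = v`, `X 4 = ω`. -/
theorem stmt17 (k : Type) [Field k] [CharZero k] (α : k)
    (I : Ideal (MvPolynomial (Fin 5) k))
    (hI : I = Ideal.span {(X 3 ^ 2 * X 1 ^ 3 - X 0 ^ 2 * X 2 - 1 : MvPolynomial (Fin 5) k)}) :
    (mkDerivation k
        (![0, 0, 2 * X 3 * X 1 ^ 3, X 0 ^ 2,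
           C ((2 : k)⁻¹) * (1 + C α * X 1) * X 0 - X 1 ^ 3] :
          Fin 5 → MvPolynomial (Fin 5) k))
      (X 3 ^ 2 * X 1 ^ 3 - X 0 ^ 2 * X 2 - 1) = 0 ∧
    ∃ D' : Derivation k (MvPolynomial (Fin 5) k ⧸ I) (MvPolynomial (Fin 5) k ⧸ I),
      (∀ p : MvPolynomial (Fin 5) k,
        D' (Ideal.Quotient.mk I p) =
          Ideal.Quotient.mk I
            ((mkDerivation k
              (![0, 0, 2 * X 3 * X 1 ^ 3, X 0 ^ 2,
                 C ((2 : k)⁻¹) * (1 + C α * X 1) * X 0 - X 1 ^ 3] :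
                Fin 5 → MvPolynomial (Fin 5) k)) p)) ∧
      (∀ a, ∃ N : ℕ, (⇑D')^[N] a = 0) :=
  stmt17_general k α I hI
end
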